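/- Every twice-differentiable solution φ of the damped Duffing equation converges to a constant equilibrium: there exists L ∈ {−1, 0, 1} such that φ(t) → L and φ′(t) → 0 as t → +∞. -/

import Mathlib

/-! The energy `E = φ'²/2 + c (φ⁴/4 − φ²/2)` satisfies `E' = −k φ'²` on `[0, ∞)`, so it
decreases and, being bounded below by `−c/4`, converges; it also keeps `(φ, φ')` bounded, hence
`E'' = −2k φ' φ''` is bounded. A convergent function whose derivative has bounded derivative
has derivative tending to `0` (Barbalat), so `φ' → 0`. Then `(φ² − 1)² = 4 (E − φ'²/2) / c + 1`
converges, and a continuous function whose square converges converges itself (it eventually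
keeps a sign when the limit is nonzero); applied to `φ² − 1` and then to `φ` this gives `φ → L`.
Finally `φ'' → −c (L³ − L)` while `φ'` converges, which forces `L³ = L`. -/

open Filter Set Topology

lemma AntitoneOn.exists_tendsto_atTop_of_bddBelow {f : ℝ → ℝ} {a b : ℝ}
    (hf : AntitoneOn f (Ici a)) (hb : ∀ x ≥ a, b ≤ f x) : ∃ L, Tendsto f atTop (𝓝 L) := by
  have hanti : Antitone fun x => f (max x a) := fun x y hxy =>
    hf (le_max_right x a) (le_max_right y a) (max_le_max_right a hxy)
  refine ⟨_, (tendsto_atTop_ciInf hanti ⟨b, ?_⟩).congr' ?_⟩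
  · rintro _ ⟨x, rfl⟩
    exact hb _ (le_max_right x a)
  · filter_upwards [eventually_ge_atTop a] with x hx
    rw [max_eq_left hx]

lemma eq_zero_of_tendsto_of_tendsto_deriv {f f' : ℝ → ℝ} {a l : ℝ}
    (hf : ∀ᶠ x in atTop, HasDerivAt f (f' x) x) (hfa : Tendsto f atTop (𝓝 a))
    (hf' : Tendsto f' atTop (𝓝 l)) : l = 0 := by
  obtain ⟨T, hT⟩ := eventually_atTop.1 hf
  have hslope : ∀ t, ∃ ξ, max t T ≤ ξ ∧ f' ξ = f (max t T + 1) - f (max t T) := by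
    intro t
    obtain ⟨ξ, hξ, hξeq⟩ := exists_hasDerivAt_eq_slope f f' (lt_add_one (max t T))
      (fun x hx => (hT x ((le_max_right t T).trans hx.1)).continuousAt.continuousWithinAt)
      (fun x hx => hT x ((le_max_right t T).trans hx.1.le))
    exact ⟨ξ, hξ.1.le, by rw [hξeq, add_sub_cancel_left, div_one]⟩
  choose ξ hξ_ge hξ_eq using hslope
  have hmax : Tendsto (fun t => max t T) atTop atTop :=
    tendsto_atTop_mono (fun t => le_max_left t T) tendsto_id
  have hξ : Tendsto ξ atTop atTop := tendsto_atTop_mono hξ_ge hmax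
  have hdiff : Tendsto (fun t => f (max t T + 1) - f (max t T)) atTop (𝓝 (a - a)) :=
    (hfa.comp (tendsto_atTop_add_const_right _ 1 hmax)).sub (hfa.comp hmax)
  rw [sub_self] at hdiff
  exact tendsto_nhds_unique (hf'.comp hξ) (hdiff.congr fun t => (hξ_eq t).symm)

lemma abs_le_abs_slope_add_mul {F g g' : ℝ → ℝ} {t δ B : ℝ} (hδ : 0 < δ)
    (hF : ∀ x ∈ Icc t (t + δ), HasDerivAt F (g x) x)
    (hg : ∀ x ∈ Icc t (t + δ), HasDerivAt g (g' x) x)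
    (hB : ∀ x ∈ Icc t (t + δ), |g' x| ≤ B) :
    |g t| ≤ |F (t + δ) - F t| / δ + B * δ := by
  obtain ⟨ξ, hξ, hξeq⟩ := exists_hasDerivAt_eq_slope F g (lt_add_of_pos_right t hδ)
    (fun x hx => (hF x hx).continuousAt.continuousWithinAt)
    (fun x hx => hF x (Ioo_subset_Icc_self hx))
  have hvar : |g ξ - g t| ≤ B * (ξ - t) :=
    norm_image_sub_le_of_norm_deriv_le_segment' (fun x hx => (hg x hx).hasDerivWithinAt)
      (fun x hx => hB x (Ico_subset_Icc_self hx)) ξ (Ioo_subset_Icc_self hξ)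
  have hB0 : 0 ≤ B := (abs_nonneg _).trans (hB t (left_mem_Icc.2 (by linarith)))
  have hslope : |g ξ| = |F (t + δ) - F t| / δ := by
    rw [hξeq, add_sub_cancel_left, abs_div, abs_of_pos hδ]
  have hξδ : B * (ξ - t) ≤ B * δ := mul_le_mul_of_nonneg_left (by linarith [hξ.2]) hB0
  calc |g t| = |g ξ - (g ξ - g t)| := by rw [sub_sub_cancel]
    _ ≤ |g ξ| + |g ξ - g t| := abs_sub _ _
    _ ≤ |F (t + δ) - F t| / δ + B * δ := by linarith

lemma tendsto_zero_of_tendsto_of_hasDerivAt_of_abs_deriv_le {F g g' : ℝ → ℝ} {L B : ℝ}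
    (hFL : Tendsto F atTop (𝓝 L)) (hF : ∀ᶠ x in atTop, HasDerivAt F (g x) x)
    (hg : ∀ᶠ x in atTop, HasDerivAt g (g' x) x) (hB : ∀ᶠ x in atTop, |g' x| ≤ B) :
    Tendsto g atTop (𝓝 0) := by
  obtain ⟨T, hT⟩ := eventually_atTop.1 (hF.and (hg.and hB))
  rw [Metric.tendsto_nhds]
  intro ε hε
  set δ := ε / (2 * (|B| + 1)) with hδ_def
  have hδ : 0 < δ := by positivity
  have hBδ : B * δ < ε / 2 := by
    rw [hδ_def, mul_div_assoc', div_lt_div_iff₀ (by positivity) two_pos]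
    nlinarith [le_abs_self B]
  have hincr : Tendsto (fun t => F (t + δ) - F t) atTop (𝓝 0) := by
    simpa using (hFL.comp (tendsto_atTop_add_const_right _ δ tendsto_id)).sub hFL
  filter_upwards [eventually_ge_atTop T, hincr.eventually (Metric.ball_mem_nhds 0
    (mul_pos hδ (half_pos hε)))] with t ht hsmall
  have hsmall : |F (t + δ) - F t| / δ < ε / 2 := by
    rw [Real.dist_eq, sub_zero] at hsmall
    rwa [div_lt_iff₀ hδ, mul_comm]
  have hle := abs_le_abs_slope_add_mul hδ (fun x hx => (hT x (ht.trans hx.1)).1)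
    (fun x hx => (hT x (ht.trans hx.1)).2.1) (fun x hx => (hT x (ht.trans hx.1)).2.2)
  rw [Real.dist_eq, sub_zero]
  linarith

lemma exists_tendsto_of_tendsto_sq {f : ℝ → ℝ} {r : ℝ} (hf : Continuous f)
    (hr : Tendsto (fun t => f t ^ 2) atTop (𝓝 r)) : ∃ L, Tendsto f atTop (𝓝 L) := by
  have habs : Tendsto (fun t => |f t|) atTop (𝓝 (√r)) := by
    simpa only [Function.comp_def, Real.sqrt_sq_eq_abs] using
      (Real.continuous_sqrt.tendsto r).comp hr
  rcases (ge_of_tendsto' hr fun t => sq_nonneg (f t)).eq_or_lt with hr0 | hr0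
  · rw [← hr0, Real.sqrt_zero] at habs
    exact ⟨0, (tendsto_zero_iff_abs_tendsto_zero f).2 habs⟩
  obtain ⟨T, hT⟩ := eventually_atTop.1 (habs.eventually_const_lt (Real.sqrt_pos.2 hr0))
  have hsign := isPreconnected_Ici.eq_or_eq_neg_of_sq_eq hf.continuousOn hf.abs.continuousOn
    (fun t _ => by simp only [Pi.pow_apply, sq_abs]) (fun {t} ht => (hT t ht).ne')
  have hev : ∀ᶠ t in atTop, t ∈ Ici T := eventually_ge_atTop T
  rcases hsign with h | h
  · exact ⟨√r, habs.congr' (hev.mono fun t ht => (h ht).symm)⟩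
  · exact ⟨-√r, habs.neg.congr' (hev.mono fun t ht => (h ht).symm)⟩

noncomputable def duffingEnergy (c : ℝ) (φ : ℝ → ℝ) (t : ℝ) : ℝ :=
  deriv φ t ^ 2 / 2 + c * (φ t ^ 4 / 4 - φ t ^ 2 / 2)

section Duffing

variable {k c : ℝ} {φ : ℝ → ℝ}

lemma hasDerivAt_duffingEnergy (hφ : Differentiable ℝ φ) (hφ' : Differentiable ℝ (deriv φ))
    (hode : ∀ t : ℝ, 0 ≤ t →
      deriv (deriv φ) t + k * deriv φ t + c * ((φ t) ^ 3 - φ t) = 0)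
    {t : ℝ} (ht : 0 ≤ t) : HasDerivAt (duffingEnergy c φ) (-k * deriv φ t ^ 2) t := by
  have h := ((((hφ' t).hasDerivAt.pow 2).div_const 2).add
    (((((hφ t).hasDerivAt.pow 4).div_const 4).sub
      (((hφ t).hasDerivAt.pow 2).div_const 2)).const_mul c))
  refine h.congr_deriv ?_
  push_cast
  linear_combination deriv φ t * hode t ht

lemma neg_div_four_le_duffingEnergy (hc : 0 ≤ c) (t : ℝ) : -c / 4 ≤ duffingEnergy c φ t := by
  unfold duffingEnergy
  nlinarith [mul_nonneg hc (sq_nonneg (φ t ^ 2 - 1)), sq_nonneg (deriv φ t)]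

lemma duffingEnergy_antitoneOn (hk : 0 ≤ k)
    (hE : ∀ t ≥ 0, HasDerivAt (duffingEnergy c φ) (-k * deriv φ t ^ 2) t) :
    AntitoneOn (duffingEnergy c φ) (Ici 0) := by
  refine antitoneOn_of_hasDerivWithinAt_nonpos (f' := fun t => -k * deriv φ t ^ 2)
    (convex_Ici 0) (fun t ht => (hE t ht).continuousAt.continuousWithinAt) (fun t ht => ?_)
    (fun t _ => ?_)
  · rw [interior_Ici] at ht
    exact (hE t (le_of_lt ht)).hasDerivWithinAt
  · nlinarith [sq_nonneg (deriv φ t)]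

lemma exists_abs_le_of_antitoneOn_duffingEnergy (hc : 0 < c)
    (hanti : AntitoneOn (duffingEnergy c φ) (Ici 0)) :
    ∃ M, ∀ t ≥ 0, |φ t| ≤ M ∧ |deriv φ t| ≤ M := by
  set A := duffingEnergy c φ 0
  refine ⟨max √(4 * (A + c) / c) √(2 * A + c / 2), fun t ht => ⟨?_, ?_⟩⟩
  all_goals
    have hA : duffingEnergy c φ t ≤ A := hanti self_mem_Ici ht ht
    unfold duffingEnergy at hA
  · refine (Real.abs_le_sqrt ?_).trans (le_max_left _ _)
    rw [le_div_iff₀ hc]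
    nlinarith [mul_nonneg hc.le (sq_nonneg (φ t ^ 2 - 3 / 2)), sq_nonneg (deriv φ t)]
  · refine (Real.abs_le_sqrt ?_).trans (le_max_right _ _)
    nlinarith [mul_nonneg hc.le (sq_nonneg (φ t ^ 2 - 1))]

lemma exists_abs_deriv_mul_deriv_deriv_le
    (hode : ∀ t : ℝ, 0 ≤ t →
      deriv (deriv φ) t + k * deriv φ t + c * ((φ t) ^ 3 - φ t) = 0)
    {M : ℝ} (hM : ∀ t ≥ 0, |φ t| ≤ M ∧ |deriv φ t| ≤ M) :
    ∃ B, ∀ t ≥ 0, |deriv φ t * deriv (deriv φ) t| ≤ B := by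
  obtain ⟨B, hB⟩ := (isCompact_Icc.prod isCompact_Icc).exists_bound_of_continuousOn
    (f := fun p : ℝ × ℝ => p.2 * (-k * p.2 - c * (p.1 ^ 3 - p.1)))
    (s := Icc (-M) M ×ˢ Icc (-M) M) (by fun_prop)
  refine ⟨B, fun t ht => ?_⟩
  have hφ'' : deriv (deriv φ) t = -k * deriv φ t - c * (φ t ^ 3 - φ t) := by
    linear_combination hode t ht
  rw [hφ'']
  exact hB (φ t, deriv φ t) ⟨abs_le.1 (hM t ht).1, abs_le.1 (hM t ht).2⟩

lemma tendsto_deriv_zero_of_tendsto_duffingEnergy (hk : 0 < k)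
    (hφ' : Differentiable ℝ (deriv φ))
    (hE : ∀ t ≥ 0, HasDerivAt (duffingEnergy c φ) (-k * deriv φ t ^ 2) t)
    {E : ℝ} (hElim : Tendsto (duffingEnergy c φ) atTop (𝓝 E))
    {B : ℝ} (hB : ∀ t ≥ 0, |deriv φ t * deriv (deriv φ) t| ≤ B) :
    Tendsto (deriv φ) atTop (𝓝 0) := by
  have hbound : ∀ t ≥ 0, |-k * (2 * deriv φ t * deriv (deriv φ) t)| ≤ k * (2 * B) := by
    intro t ht
    rw [abs_mul, abs_neg, abs_of_pos hk, mul_assoc, abs_mul, abs_two]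
    gcongr
    exact hB t ht
  have hdiss : Tendsto (fun t => -k * deriv φ t ^ 2) atTop (𝓝 0) :=
    tendsto_zero_of_tendsto_of_hasDerivAt_of_abs_deriv_le hElim
      (eventually_ge_atTop 0 |>.mono hE)
      (Eventually.of_forall fun t => (((hφ' t).hasDerivAt.pow 2).const_mul (-k)).congr_deriv
        (by push_cast; ring))
      (eventually_ge_atTop 0 |>.mono hbound)
  have hsq : Tendsto (fun t => deriv φ t ^ 2) atTop (𝓝 0) := by
    simpa [hk.ne'] using hdiss.const_mul (-k⁻¹)
  refine (tendsto_zero_iff_abs_tendsto_zero _).2 ?_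
  simpa only [Function.comp_def, Real.sqrt_sq_eq_abs, Real.sqrt_zero] using
    (Real.continuous_sqrt.tendsto 0).comp hsq

lemma exists_tendsto_of_tendsto_duffingEnergy (hc : 0 < c) (hφ : Continuous φ)
    {E : ℝ} (hElim : Tendsto (duffingEnergy c φ) atTop (𝓝 E))
    (hφ'0 : Tendsto (deriv φ) atTop (𝓝 0)) : ∃ L, Tendsto φ atTop (𝓝 L) := by
  have hW : Tendsto (fun t => (φ t ^ 2 - 1) ^ 2) atTop (𝓝 (4 / c * (E - 0 ^ 2 / 2) + 1)) := by
    refine (((hElim.sub ((hφ'0.pow 2).div_const 2)).const_mul (4 / c)).add_const 1).congr ?_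
    intro t
    unfold duffingEnergy
    field_simp
    ring
  obtain ⟨L₁, hL₁⟩ := exists_tendsto_of_tendsto_sq (by fun_prop) hW
  exact exists_tendsto_of_tendsto_sq hφ ((hL₁.add_const 1).congr fun t => by ring)

lemma duffing_limit_mem_equilibria (hc : 0 < c) (hφ' : Differentiable ℝ (deriv φ))
    (hode : ∀ t : ℝ, 0 ≤ t →
      deriv (deriv φ) t + k * deriv φ t + c * ((φ t) ^ 3 - φ t) = 0)
    {L : ℝ} (hL : Tendsto φ atTop (𝓝 L)) (hφ'0 : Tendsto (deriv φ) atTop (𝓝 0)) :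
    L ∈ ({-1, 0, 1} : Set ℝ) := by
  have hφ'' : Tendsto (deriv (deriv φ)) atTop (𝓝 (-k * 0 - c * (L ^ 3 - L))) := by
    refine ((hφ'0.const_mul (-k)).sub (((hL.pow 3).sub hL).const_mul c)).congr' ?_
    filter_upwards [eventually_ge_atTop 0] with t ht
    linear_combination -hode t ht
  have h := eq_zero_of_tendsto_of_tendsto_deriv
    (Eventually.of_forall fun t => (hφ' t).hasDerivAt) hφ'0 hφ''
  have hcube : L * (L - 1) * (L + 1) = 0 :=
    (mul_eq_zero.1 (by linear_combination -h : c * (L * (L - 1) * (L + 1)) = 0)).resolve_left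
      hc.ne'
  rcases mul_eq_zero.1 hcube with h₁ | h₁
  · rcases mul_eq_zero.1 h₁ with h₂ | h₂
    · simp [h₂]
    · simp [sub_eq_zero.1 h₂]
  · simp [eq_neg_of_add_eq_zero_left h₁]

end Duffing

theorem duffing_convergence_to_equilibrium (k c : ℝ) (hk : 0 < k) (hc : 0 < c)
    (φ : ℝ → ℝ) (hφ : Differentiable ℝ φ) (hφ' : Differentiable ℝ (deriv φ))
    (hode : ∀ t : ℝ, 0 ≤ t →
      deriv (deriv φ) t + k * deriv φ t + c * ((φ t) ^ 3 - φ t) = 0) :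
    ∃ L ∈ ({-1, 0, 1} : Set ℝ),
      Tendsto φ atTop (nhds L) ∧ Tendsto (deriv φ) atTop (nhds 0) := by
  have hE : ∀ t ≥ 0, HasDerivAt (duffingEnergy c φ) (-k * deriv φ t ^ 2) t :=
    fun t ht => hasDerivAt_duffingEnergy hφ hφ' hode ht
  have hanti := duffingEnergy_antitoneOn hk.le hE
  obtain ⟨E, hElim⟩ := hanti.exists_tendsto_atTop_of_bddBelow
    fun t _ => neg_div_four_le_duffingEnergy hc.le t
  obtain ⟨M, hM⟩ := exists_abs_le_of_antitoneOn_duffingEnergy hc hanti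
  obtain ⟨B, hB⟩ := exists_abs_deriv_mul_deriv_deriv_le hode hM
  have hφ'0 := tendsto_deriv_zero_of_tendsto_duffingEnergy hk hφ' hE hElim hB
  obtain ⟨L, hL⟩ := exists_tendsto_of_tendsto_duffingEnergy hc hφ.continuous hElim hφ'0
  exact ⟨L, duffing_limit_mem_equilibria hc hφ' hode hL hφ'0, hL, hφ'0⟩
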